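/- For a permutation w ∈ S_n, the following statements are equivalent: (1) B(w) is order-isomorphic to the boolean lattice of all subsets of some finite set; (2) every reduced word of w has no repeated letters; (3) there exists a reduced word of w with no repeated letters; (4) w avoids the patterns 321 and 3412. -/

import Mathlib

/-!
The length `ℓ(w)` is the number of inversions, and the letters of any reduced word of `w` are
exactly the `i` for which `w` does not map `[0, i]` into itself. Hence all reduced words of `w`
use the same letters and have the same length, so one of them is repetition-free iff all are.

A repetition-free word cannot produce a `321` or `3412`: each new letter `σ_i` acts on a
permutation preserving `[0, i]`. Conversely, if `w` avoids both patterns, `a` is its least moved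
point and `w p = a`, then `w = v σ_a ⋯ σ_{p-1}` where `v` is shorter, still avoids the patterns and
preserves `[0, i]` for `a ≤ i < p`; induction gives a repetition-free reduced word.

For such `w`, reduced words differ by commutations of distant letters, so `v ↦ supp v` is an order
isomorphism from `B(w)` onto the subsets of the letters of `w`. Conversely, if `B(w) ≅ 2^S`, the
prefixes of a reduced word give a chain of length `ℓ(w)`, so `ℓ(w) ≤ |S|`, and the atoms of
`B(w)` are simple transpositions `σ_i` with `i` a letter of `w`, so `|S|` is at most the number of
distinct letters.
-/

/-- The adjacent transposition `σ_i`, swapping `i` and `i+1` (acting on `ℕ`). -/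
def sigmaT (i : ℕ) : Equiv.Perm ℕ := Equiv.swap i (i + 1)

/-- The permutation given by a word (product of simple reflections, composed as functions). -/
def wordProd (s : List ℕ) : Equiv.Perm ℕ := (s.map sigmaT).prod

/-- `s` is a word for `w` in `S_n`: all letters lie in `{1,…,n-1}` and the product is `w`. -/
def IsWord (n : ℕ) (w : Equiv.Perm ℕ) (s : List ℕ) : Prop :=
  (∀ j ∈ s, 1 ≤ j ∧ j ≤ n - 1) ∧ wordProd s = w

/-- `s` is a reduced word for `w`: a word of minimal length. -/
def IsReducedWord (n : ℕ) (w : Equiv.Perm ℕ) (s : List ℕ) : Prop :=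
  IsWord n w s ∧ ∀ t : List ℕ, IsWord n w t → s.length ≤ t.length

/-- The Coxeter length `ℓ(w)`. -/
noncomputable def ell (n : ℕ) (w : Equiv.Perm ℕ) : ℕ :=
  sInf {k | ∃ s : List ℕ, IsWord n w s ∧ s.length = k}

/-- The support of `w`: letters appearing in reduced words of `w`. -/
def supp (n : ℕ) (w : Equiv.Perm ℕ) : Set ℕ :=
  {i | ∃ s : List ℕ, IsReducedWord n w s ∧ i ∈ s}

/-- Bruhat order: some reduced word of `v` is a subsequence of some reduced word of `w`. -/
def BruhatLE (n : ℕ) (v w : Equiv.Perm ℕ) : Prop :=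
  ∃ s t : List ℕ, IsReducedWord n v s ∧ IsReducedWord n w t ∧ s.Sublist t

/-- The principal order ideal `B(w)`, as a type. -/
def IdealB (n : ℕ) (w : Equiv.Perm ℕ) : Type := {v : Equiv.Perm ℕ // BruhatLE n v w}

/-- The Bruhat order restricted to `B(w)`. -/
def IdealLE (n : ℕ) (w : Equiv.Perm ℕ) (a b : IdealB n w) : Prop := BruhatLE n a.1 b.1

/-- Two relations are isomorphic (order isomorphism of the corresponding ordered sets). -/
def RelIsomorphic {α β : Type*} (ra : α → α → Prop) (rb : β → β → Prop) : Prop :=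
  ∃ e : α ≃ β, ∀ a b : α, ra a b ↔ rb (e a) (e b)

/-- `w` is a prism: `B(w) ≅ C₂ × X` for some partially ordered set `X`
(the two-element chain `C₂` realized as `Bool`), with the componentwise order. -/
def IsPrism (n : ℕ) (w : Equiv.Perm ℕ) : Prop :=
  ∃ (X : Type) (rX : X → X → Prop), IsPartialOrder X rX ∧
    RelIsomorphic (IdealLE n w)
      (fun p q : Bool × X => (p.1 ≤ q.1) ∧ rX p.2 q.2)

/-- `w` belongs to `S_n`: it fixes every point outside `{1,…,n}`. -/
def MemSymm (n : ℕ) (w : Equiv.Perm ℕ) : Prop :=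
  ∀ x : ℕ, x ∉ Set.Icc 1 n → w x = x

/-- `i` is unconfined in the word `s`: it appears exactly once, not between two copies
of `i+1` and not between two copies of `i-1`. -/
def Unconfined (i : ℕ) (s : List ℕ) : Prop :=
  s.count i = 1 ∧ ∀ a b : List ℕ, s = a ++ i :: b →
    ¬((i + 1) ∈ a ∧ (i + 1) ∈ b) ∧ ¬((i - 1) ∈ a ∧ (i - 1) ∈ b)

/-- `B(w) ≅ C₂ × B(v)` with the componentwise order. -/
def IsoC2TimesIdeal (n : ℕ) (w v : Equiv.Perm ℕ) : Prop :=
  RelIsomorphic (IdealLE n w)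
    (fun p q : Bool × IdealB n v => (p.1 ≤ q.1) ∧ IdealLE n v p.2 q.2)

open Equiv Set

/-! ### Simple transpositions and `S_n` -/

lemma sigmaT_apply (i x : ℕ) :
    sigmaT i x = if x = i then i + 1 else if x = i + 1 then i else x := by
  simp [sigmaT, Equiv.swap_apply_def]

@[simp] lemma sigmaT_apply_left (i : ℕ) : sigmaT i i = i + 1 := swap_apply_left _ _

@[simp] lemma sigmaT_apply_right (i : ℕ) : sigmaT i (i + 1) = i := swap_apply_right _ _

@[simp] lemma sigmaT_mul_self (i : ℕ) : sigmaT i * sigmaT i = 1 := swap_mul_self _ _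

@[simp] lemma sigmaT_inv (i : ℕ) : (sigmaT i)⁻¹ = sigmaT i := swap_inv _ _

lemma sigmaT_ne_one (i : ℕ) : sigmaT i ≠ 1 := fun h => by
  simpa using DFunLike.congr_fun h i

lemma sigmaT_mul_comm {i j : ℕ} (h : i + 2 ≤ j ∨ j + 2 ≤ i) :
    sigmaT i * sigmaT j = sigmaT j * sigmaT i := by
  ext x
  simp only [Perm.mul_apply, sigmaT_apply]
  split_ifs <;> omega

lemma sigmaT_apply_le_iff {i j : ℕ} (h : i ≠ j) (x : ℕ) : sigmaT i x ≤ j ↔ x ≤ j := by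
  rw [sigmaT_apply]; split_ifs <;> omega

@[simp] lemma wordProd_nil : wordProd [] = 1 := rfl

@[simp] lemma wordProd_cons (a : ℕ) (s : List ℕ) :
    wordProd (a :: s) = sigmaT a * wordProd s := by
  simp [wordProd]

@[simp] lemma wordProd_append (s t : List ℕ) : wordProd (s ++ t) = wordProd s * wordProd t := by
  simp [wordProd]

lemma wordProd_concat (s : List ℕ) (a : ℕ) : wordProd (s ++ [a]) = wordProd s * sigmaT a := by
  simp

lemma memSymm_one (n : ℕ) : MemSymm n 1 := fun _ _ => rfl

lemma MemSymm.mul {n : ℕ} {u v : Perm ℕ} (hu : MemSymm n u) (hv : MemSymm n v) :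
    MemSymm n (u * v) := fun x hx => by
  rw [Perm.mul_apply, hv x hx, hu x hx]

lemma MemSymm.inv {n : ℕ} {w : Perm ℕ} (hw : MemSymm n w) : MemSymm n w⁻¹ := fun x hx => by
  rw [Perm.inv_eq_iff_eq, hw x hx]

lemma memSymm_sigmaT {n i : ℕ} (h1 : 1 ≤ i) (h2 : i + 1 ≤ n) : MemSymm n (sigmaT i) := by
  intro x hx
  simp only [mem_Icc, not_and_or, not_le] at hx
  rw [sigmaT_apply]
  split_ifs <;> omega

lemma memSymm_wordProd {n : ℕ} {s : List ℕ} (h : ∀ j ∈ s, 1 ≤ j ∧ j ≤ n - 1) :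
    MemSymm n (wordProd s) := by
  induction s with
  | nil => exact memSymm_one n
  | cons a t ih =>
    have ha := h a List.mem_cons_self
    rw [wordProd_cons]
    exact (memSymm_sigmaT ha.1 (by omega)).mul (ih fun j hj => h j (List.mem_cons_of_mem a hj))

lemma MemSymm.apply_mem_Icc {n : ℕ} {w : Perm ℕ} (hw : MemSymm n w) {x : ℕ}
    (hx : x ∈ Icc 1 n) : w x ∈ Icc 1 n := by
  by_contra h
  rw [w.injective (hw _ h)] at h
  exact h hx

lemma MemSymm.one_le_apply {n : ℕ} {w : Perm ℕ} (hw : MemSymm n w) {x : ℕ}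
    (h1 : 1 ≤ x) (h2 : x ≤ n) : 1 ≤ w x := (hw.apply_mem_Icc ⟨h1, h2⟩).1

lemma MemSymm.apply_le {n : ℕ} {w : Perm ℕ} (hw : MemSymm n w) {x : ℕ}
    (h1 : 1 ≤ x) (h2 : x ≤ n) : w x ≤ n := (hw.apply_mem_Icc ⟨h1, h2⟩).2

/-! ### Length as the number of inversions -/

def inversions (n : ℕ) (w : Perm ℕ) : Finset (ℕ × ℕ) :=
  (Finset.Icc 1 n ×ˢ Finset.Icc 1 n).filter fun p => p.1 < p.2 ∧ w p.2 < w p.1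

def numInversions (n : ℕ) (w : Perm ℕ) : ℕ := (inversions n w).card

lemma mem_inversions {n : ℕ} {w : Perm ℕ} {a b : ℕ} :
    (a, b) ∈ inversions n w ↔ (1 ≤ a ∧ a ≤ n) ∧ (1 ≤ b ∧ b ≤ n) ∧ a < b ∧ w b < w a := by
  simp [inversions, and_assoc]

@[simp] lemma numInversions_one (n : ℕ) : numInversions n 1 = 0 := by
  simp only [numInversions, inversions, Finset.card_eq_zero, Finset.filter_eq_empty_iff]
  intro p _
  simp only [Perm.one_apply]
  omega

/-- Right multiplication by `σ_i` permutes the inversions other than `(i, i + 1)`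
by `σ_i × σ_i`. -/
lemma numInversions_mul_sigmaT_of_lt {n i : ℕ} {w : Perm ℕ} (h1 : 1 ≤ i) (h2 : i + 1 ≤ n)
    (hasc : w i < w (i + 1)) : numInversions n (w * sigmaT i) = numInversions n w + 1 := by
  let g : ℕ × ℕ → ℕ × ℕ := fun p => (sigmaT i p.1, sigmaT i p.2)
  have hg : ∀ p, g (g p) = p := fun p => by simp [g, sigmaT]
  have hpairs : ∀ a b : ℕ, ((a, b) ≠ (i, i + 1) ∧ (1 ≤ a ∧ a ≤ n) ∧ (1 ≤ b ∧ b ≤ n) ∧ a < b) ↔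
      ((sigmaT i a, sigmaT i b) ≠ (i, i + 1) ∧ (1 ≤ sigmaT i a ∧ sigmaT i a ≤ n) ∧
        (1 ≤ sigmaT i b ∧ sigmaT i b ≤ n) ∧ sigmaT i a < sigmaT i b) := by
    intro a b
    have ha := sigmaT_apply i a
    have hb := sigmaT_apply i b
    simp only [ne_eq, Prod.mk.injEq]
    generalize sigmaT i a = a' at *
    generalize sigmaT i b = b' at *
    split_ifs at ha hb <;> omega
  have hmem : ∀ p, p ∈ (inversions n (w * sigmaT i)).erase (i, i + 1) ↔
      g p ∈ (inversions n w).erase (i, i + 1) := by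
    rintro ⟨a, b⟩
    have := hpairs a b
    simp only [g, Finset.mem_erase, mem_inversions, Perm.mul_apply] at this ⊢
    tauto
  have hcard : ((inversions n (w * sigmaT i)).erase (i, i + 1)).card =
      ((inversions n w).erase (i, i + 1)).card :=
    Finset.card_nbij' g g (fun p hp => (hmem p).1 hp)
      (fun p hp => (hmem (g p)).2 (by rwa [hg])) (fun p _ => hg p) (fun p _ => hg p)
  have hnew : (i, i + 1) ∈ inversions n (w * sigmaT i) := by
    simp only [mem_inversions, Perm.mul_apply, sigmaT_apply_left, sigmaT_apply_right]
    omega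
  have hold : (i, i + 1) ∉ inversions n w := by
    rw [mem_inversions]
    omega
  rw [numInversions, numInversions, ← Finset.card_erase_add_one hnew, hcard,
    Finset.erase_eq_of_notMem hold]

lemma numInversions_mul_sigmaT_of_gt {n i : ℕ} {w : Perm ℕ} (h1 : 1 ≤ i) (h2 : i + 1 ≤ n)
    (hdesc : w (i + 1) < w i) : numInversions n w = numInversions n (w * sigmaT i) + 1 := by
  have hasc : (w * sigmaT i) i < (w * sigmaT i) (i + 1) := by
    simpa using hdesc
  simpa [mul_assoc] using numInversions_mul_sigmaT_of_lt h1 h2 hasc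

lemma numInversions_mul_sigmaT_le {n i : ℕ} (w : Perm ℕ) (h1 : 1 ≤ i) (h2 : i + 1 ≤ n) :
    numInversions n (w * sigmaT i) ≤ numInversions n w + 1 := by
  rcases lt_trichotomy (w i) (w (i + 1)) with hlt | heq | hgt
  · exact (numInversions_mul_sigmaT_of_lt h1 h2 hlt).le
  · exact absurd (w.injective heq) (by omega)
  · have := numInversions_mul_sigmaT_of_gt h1 h2 hgt
    omega

lemma numInversions_inv {n : ℕ} {w : Perm ℕ} (hw : MemSymm n w) :
    numInversions n w⁻¹ = numInversions n w := by
  refine Finset.card_nbij' (fun p => (w⁻¹ p.2, w⁻¹ p.1)) (fun p => (w p.2, w p.1))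
    ?_ ?_ (fun p _ => by simp) (fun p _ => by simp)
  · rintro ⟨a, b⟩ hp
    simp only [Finset.mem_coe, mem_inversions, Perm.coe_inv, apply_symm_apply] at hp ⊢
    exact ⟨⟨hw.inv.one_le_apply hp.2.1.1 hp.2.1.2, hw.inv.apply_le hp.2.1.1 hp.2.1.2⟩,
      ⟨hw.inv.one_le_apply hp.1.1 hp.1.2, hw.inv.apply_le hp.1.1 hp.1.2⟩, hp.2.2.2, hp.2.2.1⟩
  · rintro ⟨a, b⟩ hp
    simp only [Finset.mem_coe, mem_inversions, Perm.coe_inv, symm_apply_apply] at hp ⊢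
    exact ⟨⟨hw.one_le_apply hp.2.1.1 hp.2.1.2, hw.apply_le hp.2.1.1 hp.2.1.2⟩,
      ⟨hw.one_le_apply hp.1.1 hp.1.2, hw.apply_le hp.1.1 hp.1.2⟩, hp.2.2.2, hp.2.2.1⟩

lemma numInversions_mul_wordProd_le (n : ℕ) (w : Perm ℕ) {s : List ℕ}
    (hs : ∀ j ∈ s, 1 ≤ j ∧ j ≤ n - 1) :
    numInversions n (w * wordProd s) ≤ numInversions n w + s.length := by
  induction s generalizing w with
  | nil => simp
  | cons a t ih =>
    have ha := hs a List.mem_cons_self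
    have h1 := ih (w * sigmaT a) fun j hj => hs j (List.mem_cons_of_mem a hj)
    have h2 := numInversions_mul_sigmaT_le w ha.1 (by omega : a + 1 ≤ n)
    rw [wordProd_cons, ← mul_assoc, List.length_cons]
    omega

lemma numInversions_wordProd_le {n : ℕ} {s : List ℕ} (hs : ∀ j ∈ s, 1 ≤ j ∧ j ≤ n - 1) :
    numInversions n (wordProd s) ≤ s.length := by
  simpa using numInversions_mul_wordProd_le n 1 hs

lemma le_apply_of_forall_lt_fixed {w : Perm ℕ} {a y : ℕ} (hfix : ∀ x < a, w x = x)
    (hy : a ≤ y) : a ≤ w y := by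
  by_contra! h
  have := w.injective (hfix _ h)
  omega

lemma exists_least_moved {n : ℕ} {w : Perm ℕ} (hw : MemSymm n w) (h : w ≠ 1) :
    ∃ a p, 1 ≤ a ∧ a < p ∧ p ≤ n ∧ w p = a ∧ ∀ x < a, w x = x := by
  have hmoved : ∃ x, w x ≠ x := by
    by_contra! hfix
    exact h (Perm.ext hfix)
  set a := Nat.find hmoved
  have hwa : w a ≠ a := Nat.find_spec hmoved
  have hfix : ∀ x < a, w x = x := fun x hx => by simpa using Nat.find_min hmoved hx
  have ha : a ∈ Icc 1 n := by
    by_contra ha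
    exact hwa (hw a ha)
  have hwp : w (w⁻¹ a) = a := by simp
  refine ⟨a, w⁻¹ a, ha.1, ?_, hw.inv.apply_le ha.1 ha.2, hwp, hfix⟩
  have hpa : w⁻¹ a ≠ a := fun h => hwa (by rwa [h] at hwp)
  have := le_apply_of_forall_lt_fixed (w := w⁻¹)
    (fun x hx => Perm.inv_eq_iff_eq.mpr (hfix x hx).symm) le_rfl
  omega

lemma exists_descent_of_lt {w : Perm ℕ} {x y : ℕ} (hxy : x < y) (hw : w y < w x) :
    ∃ i, x ≤ i ∧ i < y ∧ w (i + 1) < w i := by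
  induction y, hxy using Nat.le_induction with
  | base => exact ⟨x, le_rfl, Nat.lt_succ_self x, hw⟩
  | succ y hxy ih =>
    rcases lt_or_gt_of_ne (w.injective.ne (Nat.succ_ne_self y)) with hlt | hgt
    · exact ⟨y, by omega, Nat.lt_succ_self y, hlt⟩
    · obtain ⟨i, hi1, hi2, hi⟩ := ih (hgt.trans hw)
      exact ⟨i, hi1, hi2.trans (Nat.lt_succ_self y), hi⟩

lemma exists_descent {n : ℕ} {w : Perm ℕ} (hw : MemSymm n w) (h : w ≠ 1) :
    ∃ i, 1 ≤ i ∧ i + 1 ≤ n ∧ w (i + 1) < w i := by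
  obtain ⟨a, p, ha1, hap, hpn, hwp, hfix⟩ := exists_least_moved hw h
  have hwa : a < w a :=
    (le_apply_of_forall_lt_fixed hfix le_rfl).lt_of_ne fun h => by
      have := w.injective (h.symm.trans hwp.symm)
      omega
  obtain ⟨i, hi1, hi2, hi⟩ := exists_descent_of_lt hap (by rwa [hwp])
  exact ⟨i, by omega, by omega, hi⟩

lemma exists_word_length_eq {n : ℕ} {w : Perm ℕ} (hw : MemSymm n w) :
    ∃ s, IsWord n w s ∧ s.length = numInversions n w := by
  induction hk : numInversions n w using Nat.strong_induction_on generalizing w with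
  | _ k ih =>
    by_cases h1 : w = 1
    · subst h1
      exact ⟨[], ⟨by simp, rfl⟩, by simp [← hk]⟩
    obtain ⟨i, hi1, hi2, hdesc⟩ := exists_descent hw h1
    have hdec := numInversions_mul_sigmaT_of_gt hi1 hi2 hdesc
    obtain ⟨s, ⟨hsb, hsw⟩, hsl⟩ :=
      ih _ (by omega) (hw.mul (memSymm_sigmaT hi1 hi2)) rfl
    refine ⟨s ++ [i], ⟨?_, ?_⟩, ?_⟩
    · intro j hj
      rcases List.mem_append.mp hj with h | h
      · exact hsb j h
      · rw [List.mem_singleton.mp h]; omega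
    · rw [wordProd_concat, hsw, mul_assoc, sigmaT_mul_self, mul_one]
    · rw [List.length_append, hsl, List.length_singleton]; omega

lemma isReducedWord_iff {n : ℕ} {w : Perm ℕ} {s : List ℕ} :
    IsReducedWord n w s ↔ IsWord n w s ∧ s.length = numInversions n w := by
  constructor
  · rintro ⟨hs, hmin⟩
    obtain ⟨t, ht, htl⟩ := exists_word_length_eq (hs.2 ▸ memSymm_wordProd hs.1)
    have := numInversions_wordProd_le hs.1
    rw [hs.2] at this
    exact ⟨hs, le_antisymm (htl ▸ hmin t ht) this⟩
  · rintro ⟨hs, hlen⟩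
    refine ⟨hs, fun t ht => ?_⟩
    have := numInversions_wordProd_le ht.1
    rw [ht.2] at this
    omega

lemma IsReducedWord.length_eq {n : ℕ} {w : Perm ℕ} {s : List ℕ} (hs : IsReducedWord n w s) :
    s.length = numInversions n w := (isReducedWord_iff.mp hs).2

lemma isReducedWord_one (n : ℕ) : IsReducedWord n 1 [] :=
  isReducedWord_iff.mpr ⟨⟨by simp, rfl⟩, by simp⟩

lemma exists_isReducedWord {n : ℕ} {w : Perm ℕ} (hw : MemSymm n w) :
    ∃ s, IsReducedWord n w s := by
  obtain ⟨s, hs, hl⟩ := exists_word_length_eq hw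
  exact ⟨s, isReducedWord_iff.mpr ⟨hs, hl⟩⟩

/-! ### Letters of reduced words -/

lemma apply_le_iff_of_mapsTo_Iic {w : Perm ℕ} {i : ℕ} (h : MapsTo w (Iic i) (Iic i)) (x : ℕ) :
    w x ≤ i ↔ x ≤ i := by
  refine ⟨fun hx => ?_, fun hx => h hx⟩
  obtain ⟨y, hy, hyx⟩ := ((finite_Iic i).injOn_iff_bijOn_of_mapsTo h |>.mp
    w.injective.injOn).surjOn (mem_Iic.mpr hx)
  rw [← w.injective hyx]
  exact hy

lemma Set.MapsTo.perm_inv {w : Perm ℕ} {i : ℕ} (h : MapsTo w (Iic i) (Iic i)) :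
    MapsTo ⇑(w⁻¹) (Iic i) (Iic i) := fun x hx => by
  rw [mem_Iic, ← apply_le_iff_of_mapsTo_Iic h]
  simpa using hx

lemma mapsTo_Iic_sigmaT {i j : ℕ} (h : j ≠ i) : MapsTo (sigmaT j) (Iic i) (Iic i) :=
  fun x hx => (sigmaT_apply_le_iff h x).mpr hx

lemma mapsTo_Iic_wordProd {i : ℕ} {s : List ℕ} (h : i ∉ s) :
    MapsTo (wordProd s) (Iic i) (Iic i) := by
  induction s with
  | nil => exact mapsTo_id _
  | cons a t ih =>
    rw [List.mem_cons, not_or] at h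
    rw [wordProd_cons, Perm.coe_mul]
    exact (mapsTo_Iic_sigmaT (Ne.symm h.1)).comp (ih h.2)

lemma mapsTo_Iic_mul_sigmaT_iff {w : Perm ℕ} {i j : ℕ} (h : j ≠ i) :
    MapsTo (w * sigmaT j) (Iic i) (Iic i) ↔ MapsTo w (Iic i) (Iic i) := by
  refine ⟨fun hw => ?_, fun hw => hw.comp (mapsTo_Iic_sigmaT h)⟩
  have := hw.comp (mapsTo_Iic_sigmaT h)
  rwa [← Perm.coe_mul, mul_assoc, sigmaT_mul_self, mul_one] at this

lemma List.nodup_of_length_le_card_toFinset {α : Type*} [DecidableEq α] {l : List α}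
    (h : l.length ≤ l.toFinset.card) : l.Nodup :=
  Multiset.coe_nodup.mp (Multiset.toFinset_card_eq_card_iff_nodup.mp
    (le_antisymm (List.toFinset_card_le l) h))

section ReducedWords

variable {n : ℕ} {w : Perm ℕ} {s t : List ℕ}

lemma IsReducedWord.append_left (h : IsReducedWord n w (s ++ t)) :
    IsReducedWord n (wordProd s) s := by
  refine ⟨⟨fun j hj => h.1.1 j (List.mem_append_left t hj), rfl⟩, fun u hu => ?_⟩
  have := h.2 (u ++ t) ⟨fun j hj => (List.mem_append.mp hj).elim (hu.1 j)
    fun hjt => h.1.1 j (List.mem_append_right s hjt), by rw [wordProd_append, hu.2, ← h.1.2,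
    wordProd_append]⟩
  simpa using this

lemma IsReducedWord.append_right (h : IsReducedWord n w (s ++ t)) :
    IsReducedWord n (wordProd t) t := by
  refine ⟨⟨fun j hj => h.1.1 j (List.mem_append_right s hj), rfl⟩, fun u hu => ?_⟩
  have := h.2 (s ++ u) ⟨fun j hj => (List.mem_append.mp hj).elim
    (fun hjs => h.1.1 j (List.mem_append_left t hjs)) (hu.1 j), by rw [wordProd_append, hu.2,
    ← h.1.2, wordProd_append]⟩
  simpa using this

lemma IsReducedWord.take (h : IsReducedWord n w s) (k : ℕ) :
    IsReducedWord n (wordProd (s.take k)) (s.take k) := by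
  rw [← List.take_append_drop k s] at h
  exact h.append_left

lemma IsReducedWord.tail {a : ℕ} (h : IsReducedWord n w (a :: s)) :
    IsReducedWord n (wordProd s) s :=
  IsReducedWord.append_right (s := [a]) h

/-- The last letter `k` of a reduced word is a descent, which breaks `[0, k]`, while `σ_k`
preserves every other `[0, i]`. -/
lemma mem_iff_not_mapsTo_Iic (hs : IsReducedWord n (wordProd s) s) (i : ℕ) :
    i ∈ s ↔ ¬ MapsTo (wordProd s) (Iic i) (Iic i) := by
  induction s using List.reverseRecOn with
  | nil => simpa using mapsTo_id _
  | append_singleton t k ih =>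
    have ht := hs.append_left
    have hk := hs.1.1 k (by simp)
    have hasc : wordProd t k < wordProd t (k + 1) := by
      by_contra! hle
      have hdesc := lt_of_le_of_ne hle ((wordProd t).injective.ne (by omega))
      have h1 := numInversions_mul_sigmaT_of_gt (n := n) hk.1 (by omega) hdesc
      have h2 := hs.length_eq
      have h3 := ht.length_eq
      rw [wordProd_concat, List.length_append, List.length_singleton] at h2
      omega
    rw [wordProd_concat]
    rcases eq_or_ne i k with rfl | hik
    · simp only [List.mem_append, List.mem_singleton, or_true, true_iff]
      intro hmaps
      have := (apply_le_iff_of_mapsTo_Iic hmaps (i + 1)).not.mpr (by omega)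
      have := hmaps (mem_Iic.mpr le_rfl)
      simp only [mem_Iic, Perm.mul_apply, sigmaT_apply_left, sigmaT_apply_right] at *
      omega
    · rw [mapsTo_Iic_mul_sigmaT_iff (Ne.symm hik), ← ih ht]
      simp [hik]

lemma IsReducedWord.mem_iff_not_mapsTo_Iic (hs : IsReducedWord n w s) (i : ℕ) :
    i ∈ s ↔ ¬ MapsTo w (Iic i) (Iic i) := by
  obtain rfl := hs.1.2
  exact _root_.mem_iff_not_mapsTo_Iic hs i

lemma IsReducedWord.mem_supp_iff (hs : IsReducedWord n w s) {i : ℕ} :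
    i ∈ supp n w ↔ i ∈ s := by
  refine ⟨fun ⟨t, ht, hi⟩ => ?_, fun hi => ⟨s, hs, hi⟩⟩
  rw [hs.mem_iff_not_mapsTo_Iic, ← ht.mem_iff_not_mapsTo_Iic]
  exact hi

lemma IsReducedWord.nodup_of_nodup (hs : IsReducedWord n w s) (ht : IsReducedWord n w t)
    (hsn : s.Nodup) : t.Nodup := by
  have hfin : s.toFinset = t.toFinset := by
    ext i
    rw [List.mem_toFinset, List.mem_toFinset, ← hs.mem_supp_iff, ht.mem_supp_iff]
  refine List.nodup_of_length_le_card_toFinset ?_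
  rw [← hfin, List.toFinset_card_of_nodup hsn, hs.length_eq, ht.length_eq]

lemma isReducedWord_of_nodup (hs : ∀ j ∈ s, 1 ≤ j ∧ j ≤ n - 1) (hn : s.Nodup) :
    IsReducedWord n (wordProd s) s := by
  refine isReducedWord_iff.mpr ⟨⟨hs, rfl⟩, ?_⟩
  induction s using List.reverseRecOn with
  | nil => simp
  | append_singleton t i ih =>
    rw [List.nodup_append] at hn
    have hit : i ∉ t := fun h => hn.2.2 i h i List.mem_cons_self rfl
    have hi := hs i (by simp)
    have hmaps := apply_le_iff_of_mapsTo_Iic (mapsTo_Iic_wordProd hit)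
    have hasc : wordProd t i < wordProd t (i + 1) := by
      have := (hmaps i).mpr le_rfl
      have := (hmaps (i + 1)).not.mpr (by omega)
      omega
    rw [wordProd_concat, numInversions_mul_sigmaT_of_lt hi.1 (by omega) hasc,
      ← ih (fun j hj => hs j (by simp [hj])) hn.1]
    simp

end ReducedWords

/-! ### Pattern avoidance -/

def Contains321 (n : ℕ) (w : Perm ℕ) : Prop :=
  ∃ x1 x2 x3 : ℕ, 1 ≤ x1 ∧ x1 < x2 ∧ x2 < x3 ∧ x3 ≤ n ∧ w x3 < w x2 ∧ w x2 < w x1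

def Contains3412 (n : ℕ) (w : Perm ℕ) : Prop :=
  ∃ x1 x2 x3 x4 : ℕ, 1 ≤ x1 ∧ x1 < x2 ∧ x2 < x3 ∧ x3 < x4 ∧ x4 ≤ n ∧
    w x3 < w x4 ∧ w x4 < w x1 ∧ w x1 < w x2

/-- In the step `σ_i * u` with `i ∉ t`, `u = wordProd t` keeps positions and values on the same
side of `i + 1/2`, so swapping the values `i, i + 1` cannot create a pattern. -/
lemma not_contains321_wordProd {n : ℕ} {s : List ℕ} (hs : s.Nodup) :
    ¬ Contains321 n (wordProd s) := by
  induction s with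
  | nil =>
    rintro ⟨x1, x2, x3, -, h12, h23, -, h32, -⟩
    simp only [wordProd_nil, Perm.one_apply] at h32
    omega
  | cons i t ih =>
    rw [List.nodup_cons] at hs
    rintro ⟨x1, x2, x3, h1, h12, h23, h3n, h32, h21⟩
    refine ih hs.2 ⟨x1, x2, x3, h1, h12, h23, h3n, ?_⟩
    have hu := apply_le_iff_of_mapsTo_Iic (mapsTo_Iic_wordProd hs.1)
    have := hu x1; have := hu x2; have := hu x3
    simp only [wordProd_cons, Perm.mul_apply, sigmaT_apply] at h32 h21
    split_ifs at h32 h21 <;> omega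

lemma not_contains3412_wordProd {n : ℕ} {s : List ℕ} (hs : s.Nodup) :
    ¬ Contains3412 n (wordProd s) := by
  induction s with
  | nil =>
    rintro ⟨x1, x2, x3, x4, -, h12, h23, h34, -, -, h41, -⟩
    simp only [wordProd_nil, Perm.one_apply] at h41
    omega
  | cons i t ih =>
    rw [List.nodup_cons] at hs
    rintro ⟨x1, x2, x3, x4, h1, h12, h23, h34, h4n, q34, q41, q12⟩
    refine ih hs.2 ⟨x1, x2, x3, x4, h1, h12, h23, h34, h4n, ?_⟩
    have hu := apply_le_iff_of_mapsTo_Iic (mapsTo_Iic_wordProd hs.1)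
    have := hu x1; have := hu x2; have := hu x3; have := hu x4
    simp only [wordProd_cons, Perm.mul_apply, sigmaT_apply] at q34 q41 q12
    split_ifs at q34 q41 q12 <;> omega

lemma wordProd_range'_apply (a m x : ℕ) :
    wordProd (List.range' a m) x =
      if a ≤ x ∧ x < a + m then x + 1 else if x = a + m then a else x := by
  induction m generalizing a with
  | zero => simp only [List.range'_zero, wordProd_nil, Perm.one_apply]; split_ifs <;> omega
  | succ m ih =>
    rw [List.range'_succ, wordProd_cons, Perm.mul_apply, ih (a + 1), sigmaT_apply]
    split_ifs <;> omega

lemma wordProd_range'_inv_apply (a m x : ℕ) :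
    (wordProd (List.range' a m))⁻¹ x =
      if a < x ∧ x ≤ a + m then x - 1 else if x = a then a + m else x := by
  rw [Perm.inv_eq_iff_eq, wordProd_range'_apply]
  split_ifs <;> omega

lemma apply_lt_apply_of_forall_le_fixed {v : Perm ℕ} {a x y : ℕ} (hv : ∀ z ≤ a, v z = z)
    (hx : x ≤ a) (hxy : x < y) : v x < v y := by
  rw [hv x hx]
  by_cases hy : y ≤ a
  · rw [hv y hy]; exact hxy
  · by_contra! hle
    have := v.injective (hv _ (hle.trans hx))
    omega

lemma contains321_of_eq_comp {n a : ℕ} {v w : Perm ℕ} {f : ℕ → ℕ} (hv : ∀ x ≤ a, v x = x)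
    (hvw : ∀ x, a < x → v x = w (f x)) (hf : StrictMonoOn f (Ioi a))
    (hf1 : ∀ x, a < x → 1 ≤ f x) (hfle : ∀ x, f x ≤ x) (h : Contains321 n v) :
    Contains321 n w := by
  obtain ⟨x1, x2, x3, -, h12, h23, h3n, h32, h21⟩ := h
  have ha1 : a < x1 := by
    by_contra! hle
    exact (apply_lt_apply_of_forall_le_fixed hv hle h12).not_gt h21
  have hmono := fun x y (hx : a < x) (hxy : x < y) => hf hx (mem_Ioi.mpr (hx.trans hxy)) hxy
  refine ⟨f x1, f x2, f x3, hf1 x1 ha1, hmono x1 x2 ha1 h12, hmono x2 x3 (by omega) h23,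
    (hfle x3).trans h3n, ?_, ?_⟩
  · rwa [← hvw x2 (by omega), ← hvw x3 (by omega)]
  · rwa [← hvw x1 ha1, ← hvw x2 (by omega)]

lemma contains3412_of_eq_comp {n a : ℕ} {v w : Perm ℕ} {f : ℕ → ℕ} (hv : ∀ x ≤ a, v x = x)
    (hvw : ∀ x, a < x → v x = w (f x)) (hf : StrictMonoOn f (Ioi a))
    (hf1 : ∀ x, a < x → 1 ≤ f x) (hfle : ∀ x, f x ≤ x) (h : Contains3412 n v) :
    Contains3412 n w := by
  obtain ⟨x1, x2, x3, x4, -, h12, h23, h34, h4n, q34, q41, q12⟩ := h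
  have ha1 : a < x1 := by
    by_contra! hle
    exact (apply_lt_apply_of_forall_le_fixed hv hle (by omega : x1 < x4)).not_gt q41
  have hmono := fun x y (hx : a < x) (hxy : x < y) => hf hx (mem_Ioi.mpr (hx.trans hxy)) hxy
  refine ⟨f x1, f x2, f x3, f x4, hf1 x1 ha1, hmono x1 x2 ha1 h12, hmono x2 x3 (by omega) h23,
    hmono x3 x4 (by omega) h34, (hfle x4).trans h4n, ?_, ?_, ?_⟩
  · rwa [← hvw x3 (by omega), ← hvw x4 (by omega)]
  · rwa [← hvw x4 (by omega), ← hvw x1 ha1]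
  · rwa [← hvw x1 ha1, ← hvw x2 (by omega)]

/-- `wordProd (List.range' a (p - a)) = σ_a ⋯ σ_{p-1}` is the cycle `a ↦ a + 1 ↦ ⋯ ↦ p ↦ a`. -/
def dropCycle (w : Perm ℕ) (a p : ℕ) : Perm ℕ := w * (wordProd (List.range' a (p - a)))⁻¹

lemma dropCycle_mul (w : Perm ℕ) (a p : ℕ) :
    dropCycle w a p * wordProd (List.range' a (p - a)) = w := by
  simp [dropCycle]

section LeastMovedPoint

variable {n a p : ℕ} {w : Perm ℕ}

lemma dropCycle_apply_of_lt (hap : a < p) {x : ℕ} (hx : a < x) :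
    dropCycle w a p x = w (if x ≤ p then x - 1 else x) := by
  rw [dropCycle, Perm.mul_apply, wordProd_range'_inv_apply]
  congr 1
  split_ifs <;> omega

lemma dropCycle_apply_of_le (hap : a < p) (hwp : w p = a) (hfix : ∀ x < a, w x = x) {x : ℕ}
    (hx : x ≤ a) : dropCycle w a p x = x := by
  rw [dropCycle, Perm.mul_apply, wordProd_range'_inv_apply]
  split_ifs with h1 h2
  · omega
  · rw [h2, Nat.add_sub_cancel' hap.le, hwp]
  · exact hfix x (by omega)

lemma MemSymm.dropCycle (hw : MemSymm n w) (ha1 : 1 ≤ a) (hpn : p ≤ n) :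
    MemSymm n (dropCycle w a p) :=
  hw.mul (memSymm_wordProd fun j hj => by rw [List.mem_range'_1] at hj; omega).inv

lemma lt_apply_of_le_of_lt (hwp : w p = a) (hfix : ∀ x < a, w x = x) {y : ℕ} (hay : a ≤ y)
    (hyp : y < p) : a < w y :=
  (le_apply_of_forall_lt_fixed hfix hay).lt_of_ne fun h => by
    have := w.injective (h.symm.trans hwp.symm)
    omega

lemma apply_lt_apply_of_not_contains321 (h321 : ¬ Contains321 n w) (ha1 : 1 ≤ a)
    (hpn : p ≤ n) (hwp : w p = a) (hfix : ∀ x < a, w x = x) {x y : ℕ} (hax : a ≤ x)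
    (hxy : x < y) (hyp : y < p) : w x < w y := by
  by_contra! hle
  have hne : w y ≠ w x := w.injective.ne (by omega)
  have hpy : w p < w y := hwp ▸ lt_apply_of_le_of_lt hwp hfix (by omega) hyp
  exact h321 ⟨x, y, p, by omega, hxy, hyp, hpn, hpy, lt_of_le_of_ne hle hne⟩

lemma numInversions_eq_dropCycle_add (ha1 : 1 ≤ a) (hap : a < p) (hpn : p ≤ n) (hwp : w p = a)
    (hfix : ∀ x < a, w x = x) :
    numInversions n w = numInversions n (dropCycle w a p) + (p - a) := by
  suffices ∀ j ≤ p - a, numInversions n (dropCycle w a p * wordProd (List.range' a j)) =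
      numInversions n (dropCycle w a p) + j by
    simpa [dropCycle_mul] using this (p - a) le_rfl
  intro j
  induction j with
  | zero => simp
  | succ j ih =>
    intro hj
    have h1 : (dropCycle w a p * wordProd (List.range' a j)) (a + j) = a := by
      rw [Perm.mul_apply, wordProd_range'_apply, if_neg (by omega), if_pos rfl,
        dropCycle_apply_of_le hap hwp hfix le_rfl]
    have h2 : (dropCycle w a p * wordProd (List.range' a j)) (a + j + 1) = w (a + j) := by
      rw [Perm.mul_apply, wordProd_range'_apply, if_neg (by omega), if_neg (by omega),
        dropCycle_apply_of_lt hap (by omega), if_pos (by omega), Nat.add_sub_cancel]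
    have hasc : (dropCycle w a p * wordProd (List.range' a j)) (a + j) <
        (dropCycle w a p * wordProd (List.range' a j)) (a + j + 1) := by
      rw [h1, h2]
      exact lt_apply_of_le_of_lt hwp hfix (by omega) (by omega)
    rw [List.range'_1_concat, wordProd_concat, ← mul_assoc,
      numInversions_mul_sigmaT_of_lt (by omega) (by omega) hasc, ih (by omega)]
    ring

lemma strictMonoOn_ite_pred :
    StrictMonoOn (fun y => if y ≤ p then y - 1 else y) (Ioi a) := by
  intro x hx y hy hxy
  simp only [mem_Ioi] at hx hy
  dsimp only
  split_ifs <;> omega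

lemma not_contains321_dropCycle (h321 : ¬ Contains321 n w) (ha1 : 1 ≤ a) (hap : a < p)
    (hwp : w p = a) (hfix : ∀ x < a, w x = x) : ¬ Contains321 n (dropCycle w a p) :=
  fun h => h321 <| contains321_of_eq_comp (fun _ hx => dropCycle_apply_of_le hap hwp hfix hx)
    (fun _ hx => dropCycle_apply_of_lt hap hx) strictMonoOn_ite_pred
    (fun x hx => by split_ifs <;> omega) (fun x => by split_ifs <;> omega) h

lemma not_contains3412_dropCycle (h3412 : ¬ Contains3412 n w) (ha1 : 1 ≤ a) (hap : a < p)
    (hwp : w p = a) (hfix : ∀ x < a, w x = x) : ¬ Contains3412 n (dropCycle w a p) :=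
  fun h => h3412 <| contains3412_of_eq_comp (fun _ hx => dropCycle_apply_of_le hap hwp hfix hx)
    (fun _ hx => dropCycle_apply_of_lt hap hx) strictMonoOn_ite_pred
    (fun x hx => by split_ifs <;> omega) (fun x => by split_ifs <;> omega) h

/-- A value `u ∈ (a, i]` sitting to the right of `p` would complete a `3412` with the increasing
run `w x < w (p - 1)` and `w p = a`; otherwise the values `(a, i]` are crammed into the
positions `[a, x)`, which are too few. -/
lemma mapsTo_Iic_dropCycle (hw : MemSymm n w) (h321 : ¬ Contains321 n w)
    (h3412 : ¬ Contains3412 n w) (ha1 : 1 ≤ a) (hap : a < p) (hpn : p ≤ n) (hwp : w p = a)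
    (hfix : ∀ x < a, w x = x) {i : ℕ} (hai : a ≤ i) (hip : i < p) :
    MapsTo (dropCycle w a p) (Iic i) (Iic i) := by
  have hmono : ∀ {x y}, a ≤ x → x < y → y < p → w x < w y :=
    apply_lt_apply_of_not_contains321 h321 ha1 hpn hwp hfix
  intro y hy
  rw [mem_Iic] at hy ⊢
  rcases le_or_gt y a with hya | hay
  · rw [dropCycle_apply_of_le hap hwp hfix hya]; omega
  rw [dropCycle_apply_of_lt hap hay, if_pos (by omega)]
  set x := y - 1
  by_contra! hxi
  by_cases hright : ∃ u, a < u ∧ u ≤ i ∧ p < w⁻¹ u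
  · obtain ⟨u, hau, hui, hpu⟩ := hright
    have hwu : w (w⁻¹ u) = u := by simp
    exact h3412 ⟨x, p - 1, p, w⁻¹ u, by omega, by omega, by omega, hpu,
      hw.inv.apply_le (by omega) (by omega), by rw [hwp, hwu]; exact hau,
      by rw [hwu]; omega, hmono (by omega) (by omega) (by omega)⟩
  push Not at hright
  have hmaps : ∀ u ∈ Finset.Ioc a i, w⁻¹ u ∈ Finset.Ico a x := by
    intro u hu
    rw [Finset.mem_Ioc] at hu
    have hwu : w (w⁻¹ u) = u := by simp
    have hqa : a ≤ w⁻¹ u := by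
      by_contra! h
      have := hfix _ h
      omega
    have hqp : w⁻¹ u < p := (hright u hu.1 hu.2).lt_of_ne fun h => by rw [h] at hwu; omega
    rw [Finset.mem_Ico]
    refine ⟨hqa, lt_of_not_ge fun hxq => ?_⟩
    rcases hxq.lt_or_eq with hlt | heq
    · have := hmono (by omega) hlt hqp
      omega
    · rw [← heq] at hwu
      omega
  have := Finset.card_le_card_of_injOn _ hmaps w⁻¹.injective.injOn
  simp only [Nat.card_Ioc, Nat.card_Ico] at this
  omega

end LeastMovedPoint

lemma exists_nodup_isReducedWord {n : ℕ} {w : Perm ℕ} (hw : MemSymm n w)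
    (h321 : ¬ Contains321 n w) (h3412 : ¬ Contains3412 n w) :
    ∃ s, IsReducedWord n w s ∧ s.Nodup := by
  induction hk : numInversions n w using Nat.strong_induction_on generalizing w with
  | _ k ih =>
    by_cases h1 : w = 1
    · subst h1
      exact ⟨[], isReducedWord_one n, List.nodup_nil⟩
    obtain ⟨a, p, ha1, hap, hpn, hwp, hfix⟩ := exists_least_moved hw h1
    have hinv := numInversions_eq_dropCycle_add ha1 hap hpn hwp hfix
    obtain ⟨s, hs, hsn⟩ := ih _ (by omega) (hw.dropCycle ha1 hpn)
      (not_contains321_dropCycle h321 ha1 hap hwp hfix)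
      (not_contains3412_dropCycle h3412 ha1 hap hwp hfix) rfl
    have hrange : ∀ j ∈ List.range' a (p - a), a ≤ j ∧ j < p := fun j hj => by
      rw [List.mem_range'_1] at hj; omega
    refine ⟨s ++ List.range' a (p - a), isReducedWord_iff.mpr ⟨⟨?_, ?_⟩, ?_⟩, ?_⟩
    · intro j hj
      rcases List.mem_append.mp hj with h | h
      · exact hs.1.1 j h
      · have := hrange j h; omega
    · rw [wordProd_append, hs.1.2, dropCycle_mul]
    · rw [List.length_append, hs.length_eq, List.length_range', hinv]
    · refine hsn.append List.nodup_range' fun j hjs hjr => ?_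
      have hj := hrange j hjr
      exact (hs.mem_iff_not_mapsTo_Iic j).mp hjs
        (mapsTo_Iic_dropCycle hw h321 h3412 ha1 hap hpn hwp hfix hj.1 hj.2)

/-! ### Commutation classes of repetition-free reduced words -/

lemma inv_wordProd_cons_apply_succ_lt {x : ℕ} {l : List ℕ} (hx : x ∉ l) :
    (wordProd (x :: l))⁻¹ (x + 1) < (wordProd (x :: l))⁻¹ x := by
  have hl := apply_le_iff_of_mapsTo_Iic (mapsTo_Iic_wordProd hx).perm_inv
  have h1 := (hl x).mpr le_rfl
  have h2 := (hl (x + 1)).not.mpr (by omega)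
  simp only [wordProd_cons, mul_inv_rev, sigmaT_inv, Perm.mul_apply, sigmaT_apply_left,
    sigmaT_apply_right]
  omega

lemma numInversions_sigmaT_mul_of_inv_gt {n j : ℕ} {w : Perm ℕ} (hw : MemSymm n w)
    (h1 : 1 ≤ j) (h2 : j + 1 ≤ n) (hdesc : w⁻¹ (j + 1) < w⁻¹ j) :
    numInversions n w = numInversions n (sigmaT j * w) + 1 := by
  rw [← numInversions_inv hw, ← numInversions_inv ((memSymm_sigmaT h1 h2).mul hw), mul_inv_rev,
    sigmaT_inv]
  exact numInversions_mul_sigmaT_of_gt h1 h2 hdesc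

lemma exists_isReducedWord_cons {n j : ℕ} {w : Perm ℕ} (hw : MemSymm n w) (h1 : 1 ≤ j)
    (h2 : j + 1 ≤ n) (hdesc : w⁻¹ (j + 1) < w⁻¹ j) : ∃ r, IsReducedWord n w (j :: r) := by
  have hlen := numInversions_sigmaT_mul_of_inv_gt hw h1 h2 hdesc
  obtain ⟨r, hr⟩ := exists_isReducedWord ((memSymm_sigmaT h1 h2).mul hw)
  refine ⟨r, isReducedWord_iff.mpr ⟨⟨?_, ?_⟩, ?_⟩⟩
  · intro x hx
    rcases List.mem_cons.mp hx with rfl | hx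
    · omega
    · exact hr.1.1 x hx
  · rw [wordProd_cons, hr.1.2, ← mul_assoc, sigmaT_mul_self, one_mul]
  · rw [List.length_cons, hr.length_eq, hlen]

/-- Adjacent left descents `i, i + 1` would give the `321` pattern at the positions
`w⁻¹ (i + 2) < w⁻¹ (i + 1) < w⁻¹ i`. -/
lemma add_two_le_or_of_inv_lt {n i j : ℕ} {w : Perm ℕ} (hw : MemSymm n w)
    (h321 : ¬ Contains321 n w) (hi : 1 ≤ i) (hin : i + 1 ≤ n) (hj : 1 ≤ j) (hjn : j + 1 ≤ n)
    (hdi : w⁻¹ (i + 1) < w⁻¹ i) (hdj : w⁻¹ (j + 1) < w⁻¹ j) (hij : i ≠ j) :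
    i + 2 ≤ j ∨ j + 2 ≤ i := by
  have key : ∀ k, 1 ≤ k → k + 2 ≤ n → w⁻¹ (k + 1) < w⁻¹ k → w⁻¹ (k + 2) < w⁻¹ (k + 1) →
      False := fun k hk hkn h1 h2 =>
    h321 ⟨w⁻¹ (k + 2), w⁻¹ (k + 1), w⁻¹ k, hw.inv.one_le_apply (by omega) hkn, h2, h1,
      hw.inv.apply_le hk (by omega), by simp, by simp⟩
  by_contra! h
  rcases (show j = i + 1 ∨ i = j + 1 by omega) with rfl | rfl
  · exact key i hi hjn hdi hdj
  · exact key j hj hin hdj hdi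

/-- `i` and `j` are distant left descents of `w`, so `w` has reduced words `i :: j :: r` and
`j :: i :: r`. -/
lemma exists_common_tail {n i j : ℕ} {w : Perm ℕ} {s t : List ℕ} (hs : IsReducedWord n w (i :: s))
    (ht : IsReducedWord n w (j :: t)) (hsn : (i :: s).Nodup) (hij : i ≠ j) :
    sigmaT i * sigmaT j = sigmaT j * sigmaT i ∧
      ∃ r, IsReducedWord n (wordProd s) (j :: r) ∧ IsReducedWord n (wordProd t) (i :: r) := by
  have hw := hs.1.2 ▸ memSymm_wordProd hs.1.1
  have hi := hs.1.1 i List.mem_cons_self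
  have hj := ht.1.1 j List.mem_cons_self
  have hdi : w⁻¹ (i + 1) < w⁻¹ i :=
    hs.1.2 ▸ inv_wordProd_cons_apply_succ_lt (List.nodup_cons.mp hsn).1
  have hdj : w⁻¹ (j + 1) < w⁻¹ j :=
    ht.1.2 ▸ inv_wordProd_cons_apply_succ_lt (List.nodup_cons.mp (hs.nodup_of_nodup ht hsn)).1
  have hdist := add_two_le_or_of_inv_lt hw (hs.1.2 ▸ not_contains321_wordProd hsn) hi.1
    (by omega) hj.1 (by omega) hdi hdj hij
  have hws : wordProd s = sigmaT i * w := by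
    rw [← hs.1.2, wordProd_cons, ← mul_assoc, sigmaT_mul_self, one_mul]
  have hwt : wordProd t = sigmaT j * w := by
    rw [← ht.1.2, wordProd_cons, ← mul_assoc, sigmaT_mul_self, one_mul]
  have hdj' : (wordProd s)⁻¹ (j + 1) < (wordProd s)⁻¹ j := by
    have hfix : ∀ x, x = j ∨ x = j + 1 → sigmaT i x = x := fun x hx => by
      rw [sigmaT_apply]; split_ifs <;> omega
    simpa [hws, hfix j (.inl rfl), hfix (j + 1) (.inr rfl)] using hdj
  obtain ⟨r, hr⟩ := exists_isReducedWord_cons (n := n) (memSymm_wordProd hs.tail.1.1) hj.1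
    (by omega) hdj'
  refine ⟨sigmaT_mul_comm hdist, r, hr, isReducedWord_iff.mpr ⟨⟨?_, ?_⟩, ?_⟩⟩
  · intro x hx
    rcases List.mem_cons.mp hx with rfl | hx
    · exact hi
    · exact hr.1.1 x (List.mem_cons_of_mem j hx)
  · have hr' : wordProd r = sigmaT j * wordProd s := by
      rw [← hr.1.2, wordProd_cons, ← mul_assoc, sigmaT_mul_self, one_mul]
    rw [wordProd_cons, hr', hws, hwt, ← mul_assoc, ← mul_assoc, sigmaT_mul_comm hdist,
      mul_assoc (sigmaT j), sigmaT_mul_self, mul_one]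
  · have h1 := hr.length_eq
    have h2 := hs.tail.length_eq
    have h3 := ht.tail.length_eq
    have h4 := hs.length_eq
    have h5 := ht.length_eq
    simp only [List.length_cons] at h1 h4 h5 ⊢
    omega

lemma wordProd_filter_cons (p : ℕ → Bool) (x : ℕ) (l : List ℕ) :
    wordProd ((x :: l).filter p) = (if p x then sigmaT x else 1) * wordProd (l.filter p) := by
  by_cases h : p x <;> simp [h]

/-- The nodup reduced words of `w` differ by commutations of distant letters
(`exists_common_tail`), which do not affect the products of subwords. -/
lemma IsReducedWord.wordProd_filter_eq {n : ℕ} {w : Perm ℕ} {s t : List ℕ}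
    (hs : IsReducedWord n w s) (ht : IsReducedWord n w t) (hsn : s.Nodup) (p : ℕ → Bool) :
    wordProd (s.filter p) = wordProd (t.filter p) := by
  induction hk : s.length using Nat.strong_induction_on generalizing w s t with
  | _ k ih =>
    have htn := hs.nodup_of_nodup ht hsn
    have hlen : s.length = t.length := by rw [hs.length_eq, ht.length_eq]
    match s, t, hs, ht, hsn, htn, hlen with
    | [], [], _, _, _, _, _ => rfl
    | i :: s', j :: t', hs, ht, hsn, htn, hlen =>
      have hk' : s'.length < k := by rw [← hk, List.length_cons]; omega
      rcases eq_or_ne i j with rfl | hij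
      · have hst : wordProd s' = wordProd t' := by
          have := hs.1.2.trans ht.1.2.symm
          rwa [wordProd_cons, wordProd_cons, mul_right_inj] at this
        rw [wordProd_filter_cons, wordProd_filter_cons,
          ih _ hk' hs.tail (hst ▸ ht.tail :) (List.nodup_cons.mp hsn).2 rfl]
      · obtain ⟨hcomm, r, hr, hr'⟩ := exists_common_tail hs ht hsn hij
        have hrk : (i :: r).length < k := by
          have h1 := hr.length_eq
          have h2 := hs.tail.length_eq
          simp only [List.length_cons] at h1 ⊢
          omega
        have e1 := ih _ hk' hs.tail hr (List.nodup_cons.mp hsn).2 rfl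
        have e2 := ih _ hrk hr' ht.tail
          (ht.tail.nodup_of_nodup hr' (List.nodup_cons.mp htn).2) rfl
        rw [wordProd_filter_cons p i s', e1, wordProd_filter_cons p j t', ← e2]
        simp only [wordProd_filter_cons, ← mul_assoc]
        congr 1
        by_cases hi : p i <;> by_cases hj : p j <;> simp [hi, hj, hcomm]

/-! ### Boolean ideals -/

lemma List.Sublist.eq_filter_mem {α : Type*} [DecidableEq α] {u t : List α} (hu : u.Sublist t)
    (ht : t.Nodup) : u = t.filter (· ∈ u) := by
  induction hu with
  | slnil => simp
  | @cons l₁ l₂ a h ih =>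
    rw [List.nodup_cons] at ht
    rw [List.filter_cons, if_neg (by simpa using fun ha => ht.1 (h.subset ha))]
    exact ih ht.2
  | @cons_cons l₁ l₂ a h ih =>
    rw [List.nodup_cons] at ht
    rw [List.filter_cons, if_pos (by simp), ih ht.2]
    congr 1
    refine List.filter_congr fun x hx => ?_
    have hxa : x ≠ a := fun hc => ht.1 (hc ▸ hx)
    simp [hxa, ← ih ht.2]

lemma BruhatLE.supp_subset {n : ℕ} {v w : Perm ℕ} (h : BruhatLE n v w) : supp n v ⊆ supp n w := by
  obtain ⟨u, t, hu, ht, hut⟩ := h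
  exact fun i hi => ht.mem_supp_iff.mpr (hut.subset (hu.mem_supp_iff.mp hi))

section Classical

open Classical

variable {n : ℕ} {w : Perm ℕ} {s : List ℕ}

lemma IsReducedWord.filter (hs : IsReducedWord n w s) (hsn : s.Nodup) (p : ℕ → Bool) :
    IsReducedWord n (wordProd (s.filter p)) (s.filter p) :=
  isReducedWord_of_nodup (fun j hj => hs.1.1 j (List.mem_of_mem_filter hj)) (hsn.filter p)

lemma IsReducedWord.bruhatLE_wordProd_filter (hs : IsReducedWord n w s) (hsn : s.Nodup)
    (p : ℕ → Bool) : BruhatLE n (wordProd (s.filter p)) w :=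
  ⟨_, s, hs.filter hsn p, hs, List.filter_sublist⟩

lemma IsReducedWord.wordProd_filter_supp (hs : IsReducedWord n w s) (hsn : s.Nodup)
    {v : Perm ℕ} (hv : BruhatLE n v w) : wordProd (s.filter (· ∈ supp n v)) = v := by
  obtain ⟨u, t, hu, ht, hut⟩ := hv
  have htn := hs.nodup_of_nodup ht hsn
  have hfilter : t.filter (· ∈ u) = t.filter (· ∈ supp n v) :=
    List.filter_congr fun x _ => by simp [hu.mem_supp_iff]
  rw [← ht.wordProd_filter_eq hs htn, ← hfilter, ← hut.eq_filter_mem htn, hu.1.2]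

lemma IsReducedWord.bruhatLE_iff_supp_subset (hs : IsReducedWord n w s) (hsn : s.Nodup)
    {v v' : Perm ℕ} (hv : BruhatLE n v w) (hv' : BruhatLE n v' w) :
    BruhatLE n v v' ↔ supp n v ⊆ supp n v' := by
  refine ⟨BruhatLE.supp_subset, fun h => ?_⟩
  rw [← hs.wordProd_filter_supp hsn hv, ← hs.wordProd_filter_supp hsn hv']
  exact ⟨_, _, hs.filter hsn _, hs.filter hsn _,
    List.monotone_filter_right s fun x hx => by simpa using h (by simpa using hx)⟩

lemma IsReducedWord.mem_supp_wordProd_filter (hs : IsReducedWord n w s) (hsn : s.Nodup)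
    (p : ℕ → Bool) {x : ℕ} : x ∈ supp n (wordProd (s.filter p)) ↔ x ∈ s ∧ p x := by
  rw [(hs.filter hsn p).mem_supp_iff, List.mem_filter]

/-- `v ↦ supp v` identifies `B(w)` with the subsets of the letters of `w`. -/
theorem relIsomorphic_of_nodup (hs : IsReducedWord n w s) (hsn : s.Nodup) :
    RelIsomorphic (IdealLE n w) (fun A B : Set s.toFinset => A ⊆ B) := by
  have hmem : ∀ {v : Perm ℕ}, BruhatLE n v w → ∀ {x}, x ∈ supp n v → x ∈ s.toFinset :=
    fun hv _ hx => List.mem_toFinset.mpr (hs.mem_supp_iff.mp (hv.supp_subset hx))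
  let e : IdealB n w ≃ Set s.toFinset :=
    { toFun := fun V => {x | x.1 ∈ supp n V.1}
      invFun := fun A => ⟨_, hs.bruhatLE_wordProd_filter hsn (· ∈ Subtype.val '' A)⟩
      left_inv := fun V => Subtype.ext <| by
        show wordProd (s.filter _) = V.1
        conv_rhs => rw [← hs.wordProd_filter_supp hsn V.2]
        congr 1
        refine List.filter_congr fun x _ => ?_
        simp only [decide_eq_decide, mem_image, mem_ofPred_eq, Subtype.exists, exists_and_right,
          exists_eq_right]
        exact ⟨fun ⟨_, h⟩ => h, fun h => ⟨hmem V.2 h, h⟩⟩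
      right_inv := fun A => by
        ext x
        simp only [mem_ofPred_eq, hs.mem_supp_wordProd_filter hsn, decide_eq_true_eq,
          Subtype.val_injective.mem_set_image]
        exact ⟨fun h => h.2, fun h => ⟨List.mem_toFinset.mp x.2, h⟩⟩ }
  refine ⟨e, fun V V' => (hs.bruhatLE_iff_supp_subset hsn V.2 V'.2).trans ?_⟩
  exact ⟨fun h x hx => h hx, fun h x hx => @h ⟨x, hmem V.2 hx⟩ hx⟩

end Classical

lemma bruhatLE_sigmaT_of_mem_supp {n i : ℕ} {w : Perm ℕ} (hi : i ∈ supp n w) :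
    BruhatLE n (sigmaT i) w := by
  obtain ⟨t, ht, hit⟩ := hi
  have hred := isReducedWord_of_nodup (n := n) (s := [i]) (by simpa using ht.1.1 i hit)
    (List.nodup_singleton i)
  exact ⟨[i], t, by simpa using hred, ht, List.singleton_sublist.mpr hit⟩

lemma BruhatLE.exists_sigmaT_bruhatLE {n : ℕ} {v w : Perm ℕ} (h : BruhatLE n v w) (hv : v ≠ 1) :
    ∃ i ∈ supp n w, BruhatLE n (sigmaT i) v := by
  obtain ⟨u, t, hu, ht, hut⟩ := h
  obtain ⟨i, u', rfl⟩ := List.exists_cons_of_ne_nil (l := u) fun h => hv (by rw [← hu.1.2, h,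
    wordProd_nil])
  exact ⟨i, ⟨t, ht, hut.subset List.mem_cons_self⟩,
    bruhatLE_sigmaT_of_mem_supp ⟨_, hu, List.mem_cons_self⟩⟩

section BooleanIdeal

variable {n : ℕ} {w : Perm ℕ} {t : List ℕ} {S : Type} [Fintype S] {e : IdealB n w ≃ Set S}

/-- The prefixes of `t` form a chain of length `t.length` in `B(w)`, whose image is a strictly
increasing chain of subsets of `S`. -/
lemma length_le_card_of_orderIso (he : ∀ a b, IdealLE n w a b ↔ e a ⊆ e b)
    (ht : IsReducedWord n w t) : t.length ≤ Fintype.card S := by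
  let P : ℕ → IdealB n w := fun k =>
    ⟨wordProd (t.take k), t.take k, t, ht.take k, ht, List.take_sublist k t⟩
  have hmono : ∀ k, e (P k) ⊆ e (P (k + 1)) := fun k => (he _ _).mp
    ⟨_, _, ht.take k, ht.take (k + 1), List.take_sublist_take_left (Nat.le_succ k)⟩
  have hne : ∀ k < t.length, P k ≠ P (k + 1) := fun k hk h => by
    have h1 := (ht.take k).length_eq
    have h2 := (ht.take (k + 1)).length_eq
    rw [show wordProd (t.take k) = wordProd (t.take (k + 1)) from congrArg Subtype.val h,
      ← h2, List.length_take, List.length_take] at h1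
    omega
  have hchain : ∀ k ≤ t.length, k ≤ (e (P k)).ncard := by
    intro k hk
    induction k with
    | zero => exact Nat.zero_le _
    | succ k ih =>
      have hlt := ncard_lt_ncard ((hmono k).ssubset_of_ne fun h => hne k hk (e.injective h))
      have := ih (by omega)
      omega
  calc t.length ≤ (e (P t.length)).ncard := hchain _ le_rfl
    _ ≤ Nat.card S := ncard_le_card _
    _ = Fintype.card S := Nat.card_eq_fintype_card

/-- Each singleton `{x}` corresponds to an atom of `B(w)`, which is a simple transposition `σ_i`
with `i` a letter of `t`. -/
lemma card_le_card_toFinset_of_orderIso (he : ∀ a b, IdealLE n w a b ↔ e a ⊆ e b)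
    (ht : IsReducedWord n w t) : Fintype.card S ≤ t.toFinset.card := by
  let bot : IdealB n w := ⟨1, [], t, isReducedWord_one n, ht, List.nil_sublist t⟩
  have hebot : e bot = ∅ := by
    have : IdealLE n w bot (e.symm ∅) := by
      obtain ⟨u, -, hu, -⟩ := (e.symm ∅).2
      exact ⟨[], u, isReducedWord_one n, hu, List.nil_sublist u⟩
    simpa using (he _ _).mp this
  have hatom : ∀ x : S, ∃ i ∈ t, sigmaT i = (e.symm {x}).1 := by
    intro x
    have hne : (e.symm {x}).1 ≠ 1 := fun h => by
      have : e.symm {x} = bot := Subtype.ext h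
      rw [e.symm_apply_eq, hebot] at this
      exact singleton_ne_empty x this
    obtain ⟨i, hi, hle⟩ := (e.symm {x}).2.exists_sigmaT_bruhatLE hne
    let A : IdealB n w := ⟨sigmaT i, bruhatLE_sigmaT_of_mem_supp hi⟩
    have hsub : e A ⊆ {x} := by simpa using (he A (e.symm {x})).mp hle
    rcases subset_singleton_iff_eq.mp hsub with h | h
    · exact absurd (congrArg Subtype.val (e.injective (h.trans hebot.symm))) (sigmaT_ne_one i)
    · exact ⟨i, ht.mem_supp_iff.mp hi, congrArg Subtype.val (e.symm_apply_eq.mpr h.symm).symm⟩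
  choose φ hφt hφ using hatom
  have hinj : Function.Injective φ := fun x y hxy => by
    have := (hφ x).symm.trans (hxy ▸ hφ y)
    simpa using e.symm.injective (Subtype.ext this)
  calc Fintype.card S = (Finset.univ.image φ).card := (Finset.card_image_of_injective _ hinj).symm
    _ ≤ t.toFinset.card := Finset.card_le_card fun i hi => by
      obtain ⟨x, -, rfl⟩ := Finset.mem_image.mp hi
      exact List.mem_toFinset.mpr (hφt x)

end BooleanIdeal

/-- boolean characterization: the four conditions are equivalent. -/
theorem boolean_characterization (n : ℕ) (w : Equiv.Perm ℕ) (hw : MemSymm n w) :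
    ((∃ (S : Type) (_ : Fintype S),
        RelIsomorphic (IdealLE n w) (fun A B : Set S => A ⊆ B)) ↔
      (∀ s : List ℕ, IsReducedWord n w s → s.Nodup)) ∧
    ((∀ s : List ℕ, IsReducedWord n w s → s.Nodup) ↔
      (∃ s : List ℕ, IsReducedWord n w s ∧ s.Nodup)) ∧
    ((∃ s : List ℕ, IsReducedWord n w s ∧ s.Nodup) ↔
      (¬(∃ x1 x2 x3 : ℕ, 1 ≤ x1 ∧ x1 < x2 ∧ x2 < x3 ∧ x3 ≤ n ∧
           w x3 < w x2 ∧ w x2 < w x1) ∧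
       ¬(∃ x1 x2 x3 x4 : ℕ, 1 ≤ x1 ∧ x1 < x2 ∧ x2 < x3 ∧ x3 < x4 ∧ x4 ≤ n ∧
           w x3 < w x4 ∧ w x4 < w x1 ∧ w x1 < w x2))) := by
  obtain ⟨s₀, hs₀⟩ := exists_isReducedWord hw
  refine ⟨⟨?_, fun h => ?_⟩, ⟨fun h => ⟨s₀, hs₀, h s₀ hs₀⟩, ?_⟩, ⟨?_, ?_⟩⟩
  · rintro ⟨S, _, e, he⟩ t ht
    exact List.nodup_of_length_le_card_toFinset
      ((length_le_card_of_orderIso he ht).trans (card_le_card_toFinset_of_orderIso he ht))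
  · exact ⟨_, inferInstance, relIsomorphic_of_nodup hs₀ (h s₀ hs₀)⟩
  · rintro ⟨s, hs, hsn⟩ t ht
    exact hs.nodup_of_nodup ht hsn
  · rintro ⟨s, hs, hsn⟩
    obtain rfl := hs.1.2
    exact ⟨not_contains321_wordProd hsn, not_contains3412_wordProd hsn⟩
  · rintro ⟨h321, h3412⟩
    exact exists_nodup_isReducedWord hw h321 h3412
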